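/- arXiv:1909.06880 — 9 statements merged into one kernel-verified Lean document; each statement's English description precedes it below -/
import Mathlib

section
/- For a non-real quaternion α, the similarity class {hαh⁻¹ : h ∈ ℍ \ {0}} equals the set {β ∈ ℍ : Re β = Re α and |β| = |α|}. -/
/-!
Conjugation preserves the real part (`re (x y) = re (y x)`) and the norm, which gives one
inclusion. Conversely, write `α = r + a` and `β = r + b` with `a, b` pure of the same norm.
Since a pure quaternion squares to minus its norm squared, `(b + a) a = b a - |a|² = b (b + a)`,
so `h = b + a` conjugates `a` to `b` unless `b = -a`; in that case any nonzero pure quaternion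
`u` orthogonal to `a` (i.e. `re (u a) = 0`) anticommutes with it and does the job.
-/

namespace Quaternion

section CommRing

variable {R : Type*} [CommRing R]

theorem re_mul_comm (a b : ℍ[R]) : (a * b).re = (b * a).re := by
  simp only [re_mul]
  ring

theorem normSq_eq_re_sq_add_normSq_im (a : ℍ[R]) : normSq a = a.re ^ 2 + normSq a.im := by
  simp only [normSq_def', re_im, imI_im, imJ_im, imK_im]
  ring

theorem mul_self_eq_neg_normSq {a : ℍ[R]} (ha : a.re = 0) : a * a = -normSq a := by
  rw [← star_mul_self, star_eq_two_re_sub, ha, mul_zero, coe_zero, zero_sub, neg_mul, neg_neg]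

theorem add_mul_eq_mul_add_of_normSq_eq {a b : ℍ[R]} (ha : a.re = 0) (hb : b.re = 0)
    (hab : normSq a = normSq b) : (b + a) * a = b * (b + a) := by
  rw [add_mul, mul_add, mul_self_eq_neg_normSq ha, mul_self_eq_neg_normSq hb, hab, add_comm]

theorem mul_eq_neg_mul_of_re_mul_eq_zero {u a : ℍ[R]} (hu : u.re = 0) (ha : a.re = 0)
    (h : (u * a).re = 0) : u * a = -a * u := by
  rw [re_mul, hu, ha] at h
  ext <;> simp only [re_mul, imI_mul, imJ_mul, imK_mul, re_neg, imI_neg, imJ_neg, imK_neg, hu, ha]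
  · linear_combination 2 * h
  all_goals ring

theorem exists_ne_zero_mul_eq_neg_mul [Nontrivial R] {a : ℍ[R]} (ha : a.re = 0) :
    ∃ h ≠ 0, h * a = -a * h := by
  by_cases hij : a.imI = 0 ∧ a.imJ = 0
  · refine ⟨show ℍ[R] from ⟨0, 1, 0, 0⟩, fun h => one_ne_zero (congrArg QuaternionAlgebra.imI h),
      mul_eq_neg_mul_of_re_mul_eq_zero rfl ha ?_⟩
    rw [re_mul]
    simp [hij.1]
  · refine ⟨show ℍ[R] from ⟨0, a.imJ, -a.imI, 0⟩, fun h => hij ⟨?_, ?_⟩,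
      mul_eq_neg_mul_of_re_mul_eq_zero rfl ha ?_⟩
    · simpa using congrArg QuaternionAlgebra.imJ h
    · simpa using congrArg QuaternionAlgebra.imI h
    · rw [re_mul]
      simp only [ha]
      ring

theorem exists_ne_zero_mul_eq_mul_of_normSq_eq [Nontrivial R] {a b : ℍ[R]} (ha : a.re = 0)
    (hb : b.re = 0) (hab : normSq a = normSq b) : ∃ h ≠ 0, h * a = b * h := by
  by_cases hba : b + a = 0
  · rw [eq_neg_of_add_eq_zero_left hba]
    exact exists_ne_zero_mul_eq_neg_mul ha
  · exact ⟨b + a, hba, add_mul_eq_mul_add_of_normSq_eq ha hb hab⟩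

theorem mul_eq_mul_of_re_eq_of_mul_im_eq {a b h : ℍ[R]} (hre : a.re = b.re)
    (him : h * a.im = b.im * h) : h * a = b * h := by
  rw [← re_add_im a, ← re_add_im b, mul_add, add_mul, him, hre, coe_commutes]

end CommRing

theorem exists_conj_eq_iff {R : Type*} [Field R] [LinearOrder R] [IsStrictOrderedRing R]
    (a b : ℍ[R]) : (∃ h ≠ 0, b = h * a * h⁻¹) ↔ b.re = a.re ∧ normSq b = normSq a := by
  constructor
  · rintro ⟨h, hh, rfl⟩
    refine ⟨by rw [re_mul_comm, ← mul_assoc, inv_mul_cancel₀ hh, one_mul], ?_⟩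
    rw [map_mul, map_mul, map_inv₀, mul_right_comm,
      mul_inv_cancel₀ (normSq_ne_zero.mpr hh), one_mul]
  · rintro ⟨hre, hnormSq⟩
    have him : normSq a.im = normSq b.im := by
      rw [normSq_eq_re_sq_add_normSq_im b, normSq_eq_re_sq_add_normSq_im a, hre] at hnormSq
      exact (add_left_cancel hnormSq).symm
    obtain ⟨h, hh, hconj⟩ := exists_ne_zero_mul_eq_mul_of_normSq_eq (re_im a) (re_im b) him
    exact ⟨h, hh, (eq_mul_inv_iff_mul_eq₀ hh).mpr
      (mul_eq_mul_of_re_eq_of_mul_im_eq hre.symm hconj).symm⟩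

end Quaternion

open Quaternion in
theorem similarity_class_eq_general (α : Quaternion ℝ) :
    {β : Quaternion ℝ | ∃ h : Quaternion ℝ, h ≠ 0 ∧ β = h * α * h⁻¹} =
      {β : Quaternion ℝ | β.re = α.re ∧ ‖β‖ = ‖α‖} := by
  ext β
  rw [Set.mem_ofPred_eq, Set.mem_ofPred_eq, exists_conj_eq_iff, normSq_eq_norm_mul_self,
    normSq_eq_norm_mul_self, mul_self_inj (norm_nonneg _) (norm_nonneg _)]

/-- For a non-real quaternion α, the similarity class {hαh⁻¹ : h ≠ 0} equals
{β : Re β = Re α and |β| = |α|}. -/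
theorem similarity_class_eq (α : Quaternion ℝ) (hα : α.im ≠ 0) :
    {β : Quaternion ℝ | ∃ h : Quaternion ℝ, h ≠ 0 ∧ β = h * α * h⁻¹} =
      {β : Quaternion ℝ | β.re = α.re ∧ ‖β‖ = ‖α‖} :=
  similarity_class_eq_general α
end

section
/- For a non-real quaternion α, the orthogonal complement of C_α = {β : αβ = βα} in ℍ ≅ ℝ⁴ (with the Euclidean inner product) equals the set of intertwiners {β ∈ ℍ : αβ = βᾱ}. -/
/-!
If β is orthogonal to `1` and to `α`, then β is pure and `α * β` has zero real part, so
`β * star α = -star (α * β) = α * β`. Conversely, an intertwiner β is pure because α is not real,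
and for every `v` commuting with α the product `v * β` is again an intertwiner, hence pure; thus
`⟪v, β⟫ = re (v * star β) = -re (v * β) = 0`. The centralizer never has to be computed.
-/

namespace Quaternion

variable {R : Type*} [CommRing R]

theorem star_eq_neg_of_re_eq_zero {a : ℍ[R]} (h : a.re = 0) : star a = -a := by
  rw [star_eq_two_re_sub, h, mul_zero, coe_zero, zero_sub]

theorem mul_eq_mul_star_of_re_eq_zero {α β : ℍ[R]} (hβ : β.re = 0) (hαβ : (α * β).re = 0) :
    α * β = β * star α :=
  calc α * β = -star (α * β) := by rw [star_eq_neg_of_re_eq_zero hαβ, neg_neg]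
    _ = β * star α := by rw [star_mul, star_eq_neg_of_re_eq_zero hβ, neg_mul, neg_neg]

theorem re_eq_zero_of_mul_eq_mul_star [NoZeroDivisors R] [CharZero R] {α β : ℍ[R]}
    (hα : α.im ≠ 0) (h : α * β = β * star α) : β.re = 0 := by
  have hI := congrArg (·.imI) h
  have hJ := congrArg (·.imJ) h
  have hK := congrArg (·.imK) h
  simp only [imI_mul, imJ_mul, imK_mul, re_star, imI_star, imJ_star, imK_star] at hI hJ hK
  by_contra hβ
  have h2β : (2 * β.re : R) ≠ 0 := mul_ne_zero two_ne_zero hβ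
  apply hα
  ext <;> simp only [re_im, imI_im, imJ_im, imK_im, re_zero, imI_zero, imJ_zero, imK_zero]
  · exact mul_left_cancel₀ h2β (by linear_combination hI)
  · exact mul_left_cancel₀ h2β (by linear_combination hJ)
  · exact mul_left_cancel₀ h2β (by linear_combination hK)

end Quaternion

/-- For a non-real quaternion α, the orthogonal complement of the centralizer
C_α in ℍ ≅ ℝ⁴ equals the set of intertwiners {β : αβ = βᾱ}. -/
theorem orthogonal_centralizer_eq_intertwiners (α : Quaternion ℝ) (hα : α.im ≠ 0) :
    ((Subalgebra.toSubmodule (Subalgebra.centralizer ℝ {α}))ᗮ : Set (Quaternion ℝ)) =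
      {β : Quaternion ℝ | α * β = β * star α} := by
  ext β
  simp only [SetLike.mem_coe, Submodule.mem_orthogonal, Subalgebra.mem_toSubmodule,
    Subalgebra.mem_centralizer_iff, Set.mem_singleton_iff, forall_eq, Set.mem_ofPred_eq,
    Quaternion.inner_def]
  constructor
  · intro h
    have hβ : β.re = 0 := by simpa using h 1 (by simp)
    have hαβ : (α * β).re = 0 := by
      simpa only [Quaternion.star_eq_neg_of_re_eq_zero hβ, mul_neg, Quaternion.re_neg,
        neg_eq_zero] using h α rfl
    exact Quaternion.mul_eq_mul_star_of_re_eq_zero hβ hαβ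
  · intro h v hv
    have hβ := Quaternion.re_eq_zero_of_mul_eq_mul_star hα h
    have hvβ : α * (v * β) = v * β * star α := by
      rw [← mul_assoc, hv, mul_assoc, h, mul_assoc]
    rw [Quaternion.star_eq_neg_of_re_eq_zero hβ, mul_neg, Quaternion.re_neg,
      Quaternion.re_eq_zero_of_mul_eq_mul_star hα hvβ, neg_zero]
end

section
/- If α is a non-real quaternion, γ ∈ C_α (i.e., γα = αγ) and β satisfies αβ = βᾱ, then βγ = γ̄β and βγ again satisfies α(βγ) = (βγ)ᾱ. -/
/-!
The centralizer of a non-real quaternion `α` is `ℝ + ℝα`: if `γ` commutes with `α`, then the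
pure parts `p = im γ` and `u = im α` commute, so `p u = star (p u)` is real and `p = (p u) u⁻¹`
is a real multiple of `u`. Writing `α = a + u`, the relation `αβ = βᾱ` says exactly that `β`
anticommutes with `u`, so `β` turns `γ = c + s u` into `γ̄ = c - s u`. Finally `ᾱ = 2 re α - α`
commutes with `γ` as well, whence `α (β γ) = β ᾱ γ = β γ ᾱ`.
-/

namespace Quaternion

variable {R : Type*}

section CommRing

variable [CommRing R] {a b c : ℍ[R]}

theorem commute_im_im (h : Commute a b) : Commute a.im b.im := by
  rw [eq_sub_of_add_eq' (re_add_im a), eq_sub_of_add_eq' (re_add_im b)]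
  exact (h.sub_right (coe_commute _ a).symm).sub_left (coe_commute _ _)

theorem commute_star_of_commute (h : Commute a b) : Commute a (star b) := by
  rw [star_eq_two_re_sub]
  exact (coe_commute _ a).symm.sub_right h

theorem im_mul_eq_neg_mul_im_of_mul_eq_mul_star (h : a * b = b * star a) :
    a.im * b = -(b * a.im) := by
  rw [← re_add_im a, star_add, star_coe, star_im, add_mul, mul_add, coe_commutes] at h
  simpa using h

theorem mul_eq_star_mul_of_im_eq_smul {u : ℍ[R]} {s : R} (hu : u * b = -(b * u))
    (hc : c.im = s • u) : b * c = star c * b := by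
  rw [← re_add_im c, star_add, star_coe, star_im, hc, mul_add, add_mul, coe_commutes,
    mul_smul_comm, neg_mul, smul_mul_assoc, hu, smul_neg, neg_neg]

end CommRing

theorem exists_im_eq_smul_im_of_commute [Field R] [LinearOrder R] [IsStrictOrderedRing R]
    {a b : ℍ[R]} (h : Commute a b) (hb : b.im ≠ 0) : ∃ s : R, a.im = s • b.im := by
  have hreal : a.im * b.im = ((a.im * b.im).re : ℍ[R]) := by
    rw [← star_eq_self, star_mul, star_im, star_im, neg_mul_neg, (commute_im_im h).eq]
  refine ⟨-((a.im * b.im).re * (normSq b.im)⁻¹), ?_⟩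
  calc a.im = a.im * b.im * b.im⁻¹ := (mul_inv_cancel_right₀ hb _).symm
    _ = _ := by rw [hreal, inv_def, star_im, coe_mul_eq_smul, smul_smul, smul_neg, neg_smul, re_coe]

end Quaternion

open Quaternion

/-- If α is non-real, γ commutes with α and β intertwines α and ᾱ,
then βγ = γ̄β and α(βγ) = (βγ)ᾱ. -/
theorem intertwiner_mul_centralizer (α β γ : Quaternion ℝ) (hα : α.im ≠ 0)
    (hγ : γ * α = α * γ) (hβ : α * β = β * star α) :
    β * γ = star γ * β ∧ α * (β * γ) = (β * γ) * star α := by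
  obtain ⟨s, hs⟩ := exists_im_eq_smul_im_of_commute hγ hα
  refine ⟨mul_eq_star_mul_of_im_eq_smul (im_mul_eq_neg_mul_im_of_mul_eq_mul_star hβ) hs, ?_⟩
  rw [← mul_assoc, hβ, mul_assoc, mul_assoc, (commute_star_of_commute hγ).eq]
end

section
/- For α ∈ ℍ with 0 < |α| < 1, the left evaluation of the series k_α(z) = Σ ᾱᵏ zᵏ at any γ with |γ| < 1/|α| equals (1 − γ(α + ᾱ) + γ²|α|²)⁻¹ (1 − γα), and the denominator 1 − γ(α+ᾱ) + γ²|α|² is a nonzero real-coefficient expression; in particular k_α has no left zeros. -/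
/-!
The coefficients `fₖ = γᵏ ᾱᵏ` satisfy the left-linear recurrence
`fₖ₊₂ = γ(α+ᾱ) fₖ₊₁ − γ²|α|² fₖ`, because `ᾱ` is a root of its real characteristic polynomial
`t² − (α+ᾱ)t + |α|²` and the real numbers `α+ᾱ`, `|α|²` commute with `γ`. Summing the recurrence
against the absolutely convergent series `S = Σ fₖ` gives `(1 − γ(α+ᾱ) + γ²|α|²) S = 1 − γα`,
and the right side is nonzero since `|γα| < 1`.
-/

theorem HasSum.one_sub_add_mul_eq_of_recurrence {R : Type*} [Ring R] [TopologicalSpace R]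
    [IsTopologicalRing R] [T2Space R] {f : ℕ → R} {S a b : R} (hf : HasSum f S)
    (hrec : ∀ k, f (k + 2) = a * f (k + 1) - b * f k) :
    (1 - a + b) * S = f 0 + f 1 - a * f 0 := by
  have hshift₂ : HasSum (fun k => f (k + 2)) (S - (f 0 + f 1)) := by
    simpa [Finset.sum_range_succ] using (hasSum_nat_add_iff' 2).mpr hf
  have hshift₁ : HasSum (fun k => f (k + 1)) (S - f 0) := by
    simpa using (hasSum_nat_add_iff' 1).mpr hf
  have hrec_sum : HasSum (fun k => f (k + 2)) (a * (S - f 0) - b * S) := by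
    simpa only [hrec] using (hshift₁.mul_left a).sub (hf.mul_left b)
  have hsum_eq := hshift₂.unique hrec_sum
  calc (1 - a + b) * S = S - (a * (S - f 0) - b * S) - a * f 0 := by noncomm_ring
    _ = f 0 + f 1 - a * f 0 := by rw [← hsum_eq]; abel

theorem pow_mul_pow_add_two_eq {R : Type*} [Ring R] {γ β s p : R} (hs : Commute s γ)
    (hp : Commute p γ) (hβ : β ^ 2 = s * β - p) (k : ℕ) :
    γ ^ (k + 2) * β ^ (k + 2) =
      γ * s * (γ ^ (k + 1) * β ^ (k + 1)) - γ ^ 2 * p * (γ ^ k * β ^ k) := by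
  have hγs : γ ^ (k + 2) * s = γ * s * γ ^ (k + 1) := by
    rw [pow_succ' γ (k + 1), mul_assoc, mul_assoc, (hs.pow_right (k + 1)).eq]
  have hγp : γ ^ (k + 2) * p = γ ^ 2 * p * γ ^ k := by
    rw [add_comm k 2, pow_add, mul_assoc, ← (hp.pow_right k).eq, mul_assoc]
  calc γ ^ (k + 2) * β ^ (k + 2) = γ ^ (k + 2) * ((s * β - p) * β ^ k) := by
        rw [← hβ, ← pow_add, add_comm 2 k]
    _ = γ ^ (k + 2) * s * β ^ (k + 1) - γ ^ (k + 2) * p * β ^ k := by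
        rw [pow_succ' β k]; noncomm_ring
    _ = _ := by rw [hγs, hγp]; noncomm_ring

theorem summable_pow_mul_pow_of_norm_mul_lt_one {R : Type*} [NormedRing R] [NormOneClass R]
    [CompleteSpace R] {γ β : R} (h : ‖γ‖ * ‖β‖ < 1) :
    Summable fun k : ℕ => γ ^ k * β ^ k := by
  refine Summable.of_norm_bounded (summable_geometric_of_lt_one (by positivity) h) fun k => ?_
  calc ‖γ ^ k * β ^ k‖ ≤ ‖γ‖ ^ k * ‖β‖ ^ k :=
        (norm_mul_le _ _).trans (mul_le_mul (norm_pow_le _ _) (norm_pow_le _ _)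
          (norm_nonneg _) (by positivity))
    _ = (‖γ‖ * ‖β‖) ^ k := (mul_pow _ _ _).symm

theorem mul_lt_one_of_lt_one_div {a b : ℝ} (hb : 0 ≤ b) (h : a < 1 / b) : a * b < 1 := by
  rcases hb.eq_or_lt with rfl | hb
  · simp
  · exact (lt_div_iff₀ hb).mp h

namespace Quaternion

theorem coe_norm_sq (α : ℍ[ℝ]) : ((‖α‖ ^ 2 : ℝ) : ℍ[ℝ]) = α * star α := by
  rw [self_mul_star, normSq_eq_norm_mul_self, sq]

theorem star_sq (α : ℍ[ℝ]) :
    star α ^ 2 = (α + star α) * star α - ((‖α‖ ^ 2 : ℝ) : ℍ[ℝ]) := by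
  rw [coe_norm_sq, add_mul, add_sub_cancel_left, sq]

theorem commute_add_star (α γ : ℍ[ℝ]) : Commute (α + star α) γ := by
  rw [self_add_star']
  exact coe_commute _ γ

end Quaternion

theorem kernel_series_left_value_general (α : Quaternion ℝ)
    (γ : Quaternion ℝ) (hγ : ‖γ‖ < 1 / ‖α‖) :
    1 - γ * (α + star α) + γ ^ 2 * ((‖α‖ ^ 2 : ℝ) : Quaternion ℝ) ≠ 0 ∧
    HasSum (fun k : ℕ => γ ^ k * (star α) ^ k)
      ((1 - γ * (α + star α) + γ ^ 2 * ((‖α‖ ^ 2 : ℝ) : Quaternion ℝ))⁻¹ *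
        (1 - γ * α)) ∧
    (1 - γ * (α + star α) + γ ^ 2 * ((‖α‖ ^ 2 : ℝ) : Quaternion ℝ))⁻¹ *
        (1 - γ * α) ≠ 0 := by
  set D := 1 - γ * (α + star α) + γ ^ 2 * ((‖α‖ ^ 2 : ℝ) : Quaternion ℝ)
  have hγα : ‖γ‖ * ‖star α‖ < 1 := by
    rw [Quaternion.norm_star]; exact mul_lt_one_of_lt_one_div (norm_nonneg α) hγ
  obtain ⟨S, hS⟩ := summable_pow_mul_pow_of_norm_mul_lt_one hγα
  have hDS : D * S = 1 - γ * α := by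
    rw [hS.one_sub_add_mul_eq_of_recurrence (pow_mul_pow_add_two_eq
      (Quaternion.commute_add_star α γ) (Quaternion.coe_commute _ γ) (Quaternion.star_sq α))]
    noncomm_ring
  have hnum : 1 - γ * α ≠ 0 := by
    refine sub_ne_zero.mpr fun h => hγα.ne ?_
    rw [Quaternion.norm_star, ← norm_mul, ← h, norm_one]
  have hD : D ≠ 0 := fun hD => hnum (by rw [← hDS, hD, zero_mul])
  have hSval : S = D⁻¹ * (1 - γ * α) := by rw [← hDS, inv_mul_cancel_left₀ hD]
  refine ⟨hD, hSval ▸ hS, hSval ▸ fun hS0 => hnum ?_⟩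
  rw [← hDS, hS0, mul_zero]

/-- For 0 < |α| < 1 and |γ| < 1/|α|, the left value of k_α(z) = Σ ᾱᵏzᵏ at γ equals
(1 − γ(α+ᾱ) + γ²|α|²)⁻¹(1 − γα); the denominator is nonzero and the value is
nonzero, so k_α has no left zeros. -/
theorem kernel_series_left_value (α : Quaternion ℝ) (h0 : 0 < ‖α‖) (h1 : ‖α‖ < 1)
    (γ : Quaternion ℝ) (hγ : ‖γ‖ < 1 / ‖α‖) :
    1 - γ * (α + star α) + γ ^ 2 * ((‖α‖ ^ 2 : ℝ) : Quaternion ℝ) ≠ 0 ∧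
    HasSum (fun k : ℕ => γ ^ k * (star α) ^ k)
      ((1 - γ * (α + star α) + γ ^ 2 * ((‖α‖ ^ 2 : ℝ) : Quaternion ℝ))⁻¹ *
        (1 - γ * α)) ∧
    (1 - γ * (α + star α) + γ ^ 2 * ((‖α‖ ^ 2 : ℝ) : Quaternion ℝ))⁻¹ *
        (1 - γ * α) ≠ 0 :=
  kernel_series_left_value_general α γ hγ
end

section
/- Let α, γ ∈ ℍ with |α| < 1 and αγ ≠ 1, γα ≠ 1. Define γ_ℓ = (1 − γα)⁻¹ γ (1 − γα) and γ_r = (1 − αγ) γ (1 − αγ)⁻¹. Then Re(γ_ℓ ᾱ) = Re(ᾱ γ_r) and |1 − γ_ℓ ᾱ| = |1 − ᾱ γ_r|. -/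
/-!
Write `A = 1 - γα` and `B = 1 - αγ`. Since `αᾱ = ᾱα` is real, `Aᾱ = ᾱB`, and `A⁻¹γ = γB⁻¹`.
Hence `γ_ℓᾱ = uv` and `ᾱγ_r = vu` with `u = γB⁻¹`, `v = ᾱB`; the real part and the norm of
`1 - uv` are invariant under swapping the factors, because `uv` and `vu` are conjugate.
-/

theorem inv_one_sub_mul_mul {K : Type*} [DivisionRing K] (a b : K) :
    (1 - a * b)⁻¹ * a = a * (1 - b * a)⁻¹ := by
  by_cases hab : a * b = 1
  · simp [hab, mul_eq_one_symm hab]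
  · have hba : b * a ≠ 1 := fun h ↦ hab (mul_eq_one_symm h)
    rw [inv_mul_eq_iff_eq_mul₀ (sub_ne_zero.mpr (Ne.symm hab)), ← mul_assoc,
      eq_mul_inv_iff_mul_eq₀ (sub_ne_zero.mpr (Ne.symm hba))]
    noncomm_ring

theorem norm_one_sub_mul_comm {K : Type*} [NormedDivisionRing K] (a b : K) :
    ‖1 - a * b‖ = ‖1 - b * a‖ := by
  rcases eq_or_ne a 0 with rfl | ha
  · simp
  refine mul_right_cancel₀ (norm_ne_zero_iff.mpr ha) ?_
  calc ‖1 - a * b‖ * ‖a‖ = ‖(1 - a * b) * a‖ := (norm_mul _ _).symm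
    _ = ‖a * (1 - b * a)‖ := by noncomm_ring
    _ = ‖1 - b * a‖ * ‖a‖ := by rw [norm_mul, mul_comm]

namespace Quaternion

variable {R : Type*} [CommRing R]

theorem one_sub_mul_mul_star (a b : ℍ[R]) : (1 - b * a) * star a = star a * (1 - a * b) := by
  have hcomm : b * (a * star a) = star a * a * b := by
    rw [self_mul_star, star_mul_self, ← coe_commutes]
  rw [sub_mul, mul_sub, one_mul, mul_one, mul_assoc, hcomm, mul_assoc]

end Quaternion

theorem left_right_denominators_general (α γ : Quaternion ℝ) :
    ((((1 - γ * α)⁻¹ * γ * (1 - γ * α)) * star α).re =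
        (star α * ((1 - α * γ) * γ * (1 - α * γ)⁻¹)).re) ∧
    ‖1 - ((1 - γ * α)⁻¹ * γ * (1 - γ * α)) * star α‖ =
        ‖1 - star α * ((1 - α * γ) * γ * (1 - α * γ)⁻¹)‖ := by
  set u := γ * (1 - α * γ)⁻¹
  set v := star α * (1 - α * γ)
  have hℓ : (1 - γ * α)⁻¹ * γ * (1 - γ * α) * star α = u * v := by
    rw [mul_assoc _ (1 - γ * α), Quaternion.one_sub_mul_mul_star, inv_one_sub_mul_mul,
      mul_assoc]
  have hr : star α * ((1 - α * γ) * γ * (1 - α * γ)⁻¹) = v * u := by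
    simp only [u, v, mul_assoc]
  rw [hℓ, hr]
  exact ⟨Quaternion.re_mul_comm u v, norm_one_sub_mul_comm u v⟩

/-- With γ_ℓ = (1−γα)⁻¹γ(1−γα) and γ_r = (1−αγ)γ(1−αγ)⁻¹, one has
Re(γ_ℓᾱ) = Re(ᾱγ_r) and |1 − γ_ℓᾱ| = |1 − ᾱγ_r|. -/
theorem left_right_denominators (α γ : Quaternion ℝ) (hα : ‖α‖ < 1)
    (h1 : α * γ ≠ 1) (h2 : γ * α ≠ 1) :
    ((((1 - γ * α)⁻¹ * γ * (1 - γ * α)) * star α).re =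
        (star α * ((1 - α * γ) * γ * (1 - α * γ)⁻¹)).re) ∧
    ‖1 - ((1 - γ * α)⁻¹ * γ * (1 - γ * α)) * star α‖ =
        ‖1 - star α * ((1 - α * γ) * γ * (1 - α * γ)⁻¹)‖ :=
  left_right_denominators_general α γ
end

section
/- Let α, γ ∈ ℍ with |α| < 1, |γ| ≤ 1. With γ_ℓ = (1 − γα)⁻¹γ(1 − γα), the quantity b = (1 − γ_ℓ ᾱ)⁻¹ (γ_ℓ − α) satisfies 1 − |b|² = (1 − |α|²)(1 − |γ|²) / |1 − γ_ℓ ᾱ|². In particular |b| < 1 when |γ| < 1 and |b| = 1 when |γ| = 1. -/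
/-! The Blaschke quotient identity `|1 - q p̄|² = |q - p|² + (1 - |p|²)(1 - |q|²)` holds in
any quaternion algebra by expanding coordinates; dividing by `|1 - q p̄|²` gives the formula for
`1 - |b|²`. Conjugating `γ` by `1 - γα` does not change its norm, so `|γ_ℓ| = |γ|`, and the
factors `1 - γα`, `1 - γ_ℓ ᾱ` do not vanish because `|γα| = |γ_ℓ ᾱ| < 1`. -/

open Quaternion

theorem Quaternion.normSq_one_sub_mul_star {R : Type*} [CommRing R] (p q : ℍ[R]) :
    normSq (1 - q * star p) = normSq (q - p) + (1 - normSq p) * (1 - normSq q) := by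
  simp only [normSq_def', re_sub, imI_sub, imJ_sub, imK_sub, re_one, imI_one, imJ_one,
    imK_one, re_mul, imI_mul, imJ_mul, imK_mul, re_star, imI_star, imJ_star, imK_star]
  ring

theorem Quaternion.one_sub_norm_sq_inv_one_sub_mul_star_mul_sub {p q : ℍ}
    (h : 1 - q * star p ≠ 0) :
    1 - ‖(1 - q * star p)⁻¹ * (q - p)‖ ^ 2 =
      (1 - ‖p‖ ^ 2) * (1 - ‖q‖ ^ 2) / ‖1 - q * star p‖ ^ 2 := by
  have key := normSq_one_sub_mul_star p q
  simp only [normSq_eq_norm_mul_self] at key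
  rw [norm_mul, norm_inv, mul_pow, inv_pow, eq_div_iff (by positivity)]
  field_simp
  linear_combination key

theorem norm_inv_mul_mul_self {𝕜 : Type*} [NormedDivisionRing 𝕜] {c : 𝕜} (hc : c ≠ 0) (x : 𝕜) :
    ‖c⁻¹ * x * c‖ = ‖x‖ := by
  rw [norm_mul, norm_mul, norm_inv, mul_comm ‖c‖⁻¹, mul_assoc,
    inv_mul_cancel₀ (norm_ne_zero_iff.mpr hc), mul_one]

theorem one_sub_ne_zero_of_norm_lt_one {A : Type*} [NormedRing A] [NormOneClass A] {x : A}
    (hx : ‖x‖ < 1) : 1 - x ≠ 0 := by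
  rw [sub_ne_zero]
  rintro rfl
  simp at hx

/-- For |α| < 1, |γ| ≤ 1 and γ_ℓ = (1−γα)⁻¹γ(1−γα), the value
b = (1 − γ_ℓᾱ)⁻¹(γ_ℓ − α) satisfies
1 − |b|² = (1−|α|²)(1−|γ|²)/|1 − γ_ℓᾱ|²; in particular |b| < 1 when |γ| < 1
and |b| = 1 when |γ| = 1. -/
theorem blaschke_factor_modulus (α γ : Quaternion ℝ) (hα : ‖α‖ < 1) (hγ : ‖γ‖ ≤ 1) :
    (1 - ‖(1 - ((1 - γ * α)⁻¹ * γ * (1 - γ * α)) * star α)⁻¹ *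
          (((1 - γ * α)⁻¹ * γ * (1 - γ * α)) - α)‖ ^ 2 =
        (1 - ‖α‖ ^ 2) * (1 - ‖γ‖ ^ 2) /
          ‖1 - ((1 - γ * α)⁻¹ * γ * (1 - γ * α)) * star α‖ ^ 2) ∧
    (‖γ‖ < 1 →
      ‖(1 - ((1 - γ * α)⁻¹ * γ * (1 - γ * α)) * star α)⁻¹ *
          (((1 - γ * α)⁻¹ * γ * (1 - γ * α)) - α)‖ < 1) ∧
    (‖γ‖ = 1 →
      ‖(1 - ((1 - γ * α)⁻¹ * γ * (1 - γ * α)) * star α)⁻¹ *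
          (((1 - γ * α)⁻¹ * γ * (1 - γ * α)) - α)‖ = 1) := by
  have hγα : ‖γ‖ * ‖α‖ < 1 := by nlinarith [norm_nonneg α, norm_nonneg γ]
  have hc : 1 - γ * α ≠ 0 := one_sub_ne_zero_of_norm_lt_one (by rwa [norm_mul])
  set γℓ := (1 - γ * α)⁻¹ * γ * (1 - γ * α)
  have hγℓ : ‖γℓ‖ = ‖γ‖ := norm_inv_mul_mul_self hc γ
  have hd : 1 - γℓ * star α ≠ 0 :=
    one_sub_ne_zero_of_norm_lt_one (by rwa [norm_mul, norm_star, hγℓ])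
  have key := one_sub_norm_sq_inv_one_sub_mul_star_mul_sub hd
  rw [hγℓ] at key
  set b := (1 - γℓ * star α)⁻¹ * (γℓ - α)
  refine ⟨key, fun hγ1 => ?_, fun hγ1 => ?_⟩
  · have hpos : 0 < (1 - ‖α‖ ^ 2) * (1 - ‖γ‖ ^ 2) / ‖1 - γℓ * star α‖ ^ 2 := by
      have h1 : 0 < 1 - ‖α‖ ^ 2 := by nlinarith [norm_nonneg α]
      have h2 : 0 < 1 - ‖γ‖ ^ 2 := by nlinarith [norm_nonneg γ]
      exact div_pos (mul_pos h1 h2) (by positivity)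
    exact (pow_lt_one_iff_of_nonneg (norm_nonneg b) two_ne_zero).mp (by linarith)
  · rw [hγ1, one_pow, sub_self, mul_zero, zero_div, sub_eq_zero, eq_comm] at key
    exact (pow_eq_one_iff_of_nonneg (norm_nonneg b) two_ne_zero).mp key
end

section
/- Let A ∈ ℍⁿˣⁿ and v ∈ ℍⁿ (column vector) satisfy A A* + v v* = Iₙ. Then the pair (A, v) is controllable (i.e., the n × n matrix [v, Av, …, A^{n−1}v] is invertible) if and only if Aᵏ (Aᵏ)* → 0 as k → ∞. -/
/-!
Iterating `A A* + v v* = 1` gives, for every row vector `w`, the dissipation identity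
`w Aᵏ (Aᵏ)* w* + ∑_{j<k} |w Aʲ v|² = w w*`.

If the controllability matrix `C = [v, Av, …, Aⁿ⁻¹v]` is invertible: taking `w = eᵢ` bounds
`∑ⱼ |(Aʲ v)ᵢ|²` by `1`, so `Aʲ v → 0`; the columns `Aᵏ⁺ʲ v` of `Aᵏ C` then tend to `0`, hence so
does `Aᵏ = (Aᵏ C) C⁻¹`, and with it `Aᵏ (Aᵏ)*`.

If `C` is singular, some `w ≠ 0` has `w Aʲ v = 0` for `j < n`. The Krylov spaces
`span {w, wA, …, wAᵏ⁻¹}` increase strictly until they become `A`-invariant, so they stabilise within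
`n` steps and `w Aʲ v = 0` for every `j`. The identity then reads `w Aᵏ (Aᵏ)* w* = w w* ≠ 0` for all
`k`, contradicting `Aᵏ (Aᵏ)* → 0`.
-/

open Filter Matrix Topology
open scoped Quaternion

section Krylov

variable {K V : Type*}

section Semiring

variable [Semiring K] [AddCommMonoid V] [Module K V] (T : Module.End K V) (x : V)

noncomputable def krylovSubspace (k : ℕ) : Submodule K V :=
  Submodule.span K ((fun i => (T ^ i) x) '' Set.Iio k)

theorem krylovSubspace_mono : Monotone (krylovSubspace T x) :=
  fun _ _ hkl => Submodule.span_mono (Set.image_mono (Set.Iio_subset_Iio hkl))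

theorem pow_apply_mem_krylovSubspace {i k : ℕ} (h : i < k) :
    (T ^ i) x ∈ krylovSubspace T x k :=
  Submodule.subset_span ⟨i, h, rfl⟩

theorem map_krylovSubspace_le (k : ℕ) :
    (krylovSubspace T x k).map T ≤ krylovSubspace T x (k + 1) := by
  rw [krylovSubspace, Submodule.map_span, Submodule.span_le]
  rintro _ ⟨_, ⟨i, hi, rfl⟩, rfl⟩
  rw [← Module.End.mul_apply, ← pow_succ']
  exact pow_apply_mem_krylovSubspace T x (Nat.succ_lt_succ hi)

theorem pow_apply_mem_krylovSubspace_of_mem {k : ℕ} (hk : (T ^ k) x ∈ krylovSubspace T x k)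
    (j : ℕ) : (T ^ j) x ∈ krylovSubspace T x k := by
  have hsucc : krylovSubspace T x (k + 1) ≤ krylovSubspace T x k := by
    rw [krylovSubspace, Submodule.span_le]
    rintro _ ⟨i, hi, rfl⟩
    rcases Nat.lt_succ_iff_lt_or_eq.mp hi with hi | rfl
    · exact pow_apply_mem_krylovSubspace T x hi
    · exact hk
  induction j with
  | zero => exact hsucc (pow_apply_mem_krylovSubspace T x k.succ_pos)
  | succ j ih =>
    rw [pow_succ', Module.End.mul_apply]
    exact hsucc (map_krylovSubspace_le T x k ⟨_, ih, rfl⟩)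

end Semiring

variable [DivisionRing K] [AddCommGroup V] [Module K V] [FiniteDimensional K V]
  (T : Module.End K V) (x : V)

theorem exists_pow_apply_mem_krylovSubspace :
    ∃ k ≤ Module.finrank K V, (T ^ k) x ∈ krylovSubspace T x k := by
  by_contra! hnot
  have hgrow : ∀ k ≤ Module.finrank K V + 1, k ≤ Module.finrank K (krylovSubspace T x k) := by
    intro k hk
    induction k with
    | zero => exact Nat.zero_le _
    | succ k ih =>
      have hlt : krylovSubspace T x k < krylovSubspace T x (k + 1) :=
        SetLike.lt_iff_le_and_exists.mpr ⟨krylovSubspace_mono T x k.le_succ, _,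
          pow_apply_mem_krylovSubspace T x k.lt_succ_self, hnot k (by omega)⟩
      have := Submodule.finrank_lt_finrank_of_lt hlt
      omega
  have := hgrow _ le_rfl
  have := Submodule.finrank_le (krylovSubspace T x (Module.finrank K V + 1))
  omega

theorem pow_apply_mem_krylovSubspace_finrank (j : ℕ) :
    (T ^ j) x ∈ krylovSubspace T x (Module.finrank K V) := by
  obtain ⟨k, hk, hmem⟩ := exists_pow_apply_mem_krylovSubspace T x
  exact krylovSubspace_mono T x hk (pow_apply_mem_krylovSubspace_of_mem T x hmem j)

end Krylov

namespace Matrix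

variable {m n R : Type*} [Fintype m]

theorem vecMulLinear_pow_apply [DecidableEq m] [Semiring R] (A : Matrix m m R) (x : m → R)
    (i : ℕ) : (A.vecMulLinear ^ i) x = x ᵥ* A ^ i := by
  induction i generalizing x with
  | zero => simp
  | succ i ih =>
    rw [pow_succ, Module.End.mul_apply, vecMulLinear_apply, ih, vecMul_vecMul, ← pow_succ']

theorem exists_vecMul_eq_zero_of_not_isUnit [DecidableEq m] [DivisionRing R]
    {A : Matrix m m R} (hA : ¬IsUnit A) : ∃ w ≠ 0, w ᵥ* A = 0 := by
  by_contra! hker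
  have hinj : Function.Injective A.vecMulLinear :=
    (injective_iff_map_eq_zero _).mpr fun w hw => by_contra fun hw0 => hker w hw0 hw
  obtain ⟨B, hBA⟩ := vecMul_surjective_iff_exists_left_inverse.mp
    (LinearMap.injective_iff_surjective.mp hinj)
  exact hA (isUnit_iff_exists_inv'.mpr ⟨B, hBA⟩)

theorem dotProduct_pow_mulVec_eq_zero [DecidableEq m] [DivisionRing R] {A : Matrix m m R}
    {v w : m → R} (hw : ∀ i < Fintype.card m, w ⬝ᵥ (A ^ i *ᵥ v) = 0) (j : ℕ) :
    w ⬝ᵥ (A ^ j *ᵥ v) = 0 := by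
  have hφ (u : m → R) : Fintype.linearCombination R v u = u ⬝ᵥ v := by
    simp [Fintype.linearCombination_apply, dotProduct]
  have hspan : krylovSubspace A.vecMulLinear w (Fintype.card m) ≤
      LinearMap.ker (Fintype.linearCombination R v) := by
    rw [krylovSubspace, Submodule.span_le]
    rintro _ ⟨i, hi, rfl⟩
    simp only [SetLike.mem_coe, LinearMap.mem_ker, hφ, vecMulLinear_pow_apply,
      ← dotProduct_mulVec]
    exact hw i hi
  have hmem := pow_apply_mem_krylovSubspace_finrank A.vecMulLinear w j
  rw [Module.finrank_fintype_fun_eq_card] at hmem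
  rw [dotProduct_mulVec, ← vecMulLinear_pow_apply, ← hφ]
  exact hspan hmem

section StarRing

variable [Semiring R] [StarRing R]

theorem vecMul_dotProduct_star_vecMul [Fintype n] (M : Matrix m n R) (w : m → R) :
    (w ᵥ* M) ⬝ᵥ star (w ᵥ* M) = w ⬝ᵥ ((M * Mᴴ) *ᵥ star w) := by
  rw [star_vecMul, ← mulVec_mulVec, dotProduct_mulVec w M]

theorem dotProduct_vecMulVec_star_mulVec (u v : m → R) :
    u ⬝ᵥ (vecMulVec v (star v) *ᵥ star u) = (u ⬝ᵥ v) * star (u ⬝ᵥ v) := by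
  rw [vecMulVec_mulVec, dotProduct_smul, star_dotProduct_star]
  rfl

variable [DecidableEq m] {A : Matrix m m R} {v : m → R}

theorem vecMul_dotProduct_star_add_mul_star (h : A * Aᴴ + vecMulVec v (star v) = 1)
    (u : m → R) : (u ᵥ* A) ⬝ᵥ star (u ᵥ* A) + (u ⬝ᵥ v) * star (u ⬝ᵥ v) = u ⬝ᵥ star u := by
  rw [vecMul_dotProduct_star_vecMul, ← dotProduct_vecMulVec_star_mulVec, ← dotProduct_add,
    ← add_mulVec, h, one_mulVec]

theorem vecMul_pow_dotProduct_star_add_sum (h : A * Aᴴ + vecMulVec v (star v) = 1)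
    (w : m → R) (k : ℕ) :
    (w ᵥ* A ^ k) ⬝ᵥ star (w ᵥ* A ^ k) +
      ∑ j ∈ Finset.range k, (w ⬝ᵥ (A ^ j *ᵥ v)) * star (w ⬝ᵥ (A ^ j *ᵥ v)) =
      w ⬝ᵥ star w := by
  induction k with
  | zero => simp
  | succ k ih =>
    rw [← ih, ← vecMul_dotProduct_star_add_mul_star h (w ᵥ* A ^ k), Finset.sum_range_succ,
      pow_succ, ← vecMul_vecMul, dotProduct_mulVec]
    abel

end StarRing

end Matrix

namespace Quaternion

variable {m : Type*} [Fintype m]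

theorem dotProduct_star_self (u : m → ℍ[ℝ]) :
    u ⬝ᵥ star u = ((∑ i, normSq (u i) : ℝ) : ℍ[ℝ]) := by
  simp only [dotProduct, Pi.star_apply, self_mul_star, ← algebraMap_def, map_sum]

theorem dotProduct_star_self_eq_zero {u : m → ℍ[ℝ]} : u ⬝ᵥ star u = 0 ↔ u = 0 := by
  rw [dotProduct_star_self, ← coe_zero, coe_inj,
    Finset.sum_eq_zero_iff_of_nonneg fun i _ => normSq_nonneg, funext_iff]
  simp

end Quaternion

section Controllability

variable {n : ℕ} {R : Type*}

def controllabilityMatrix [Semiring R] (A : Matrix (Fin n) (Fin n) R) (v : Fin n → R) :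
    Matrix (Fin n) (Fin n) R :=
  of fun i j => (A ^ (j : ℕ) *ᵥ v) i

theorem pow_mul_controllabilityMatrix_apply [Semiring R] (A : Matrix (Fin n) (Fin n) R)
    (v : Fin n → R) (k : ℕ) (i j : Fin n) :
    (A ^ k * controllabilityMatrix A v) i j = (A ^ (k + j) *ᵥ v) i := by
  rw [pow_add, ← mulVec_mulVec]
  rfl

theorem tendsto_pow_nhds_zero_of_isUnit_controllabilityMatrix [Ring R] [TopologicalSpace R]
    [IsTopologicalRing R] {A : Matrix (Fin n) (Fin n) R} {v : Fin n → R}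
    (hC : IsUnit (controllabilityMatrix A v))
    (hv : Tendsto (fun k => A ^ k *ᵥ v) atTop (𝓝 0)) :
    Tendsto (fun k => A ^ k) atTop (𝓝 0) := by
  have hAC : Tendsto (fun k => A ^ k * controllabilityMatrix A v) atTop (𝓝 0) := by
    refine tendsto_pi_nhds.mpr fun i => tendsto_pi_nhds.mpr fun j => ?_
    simp only [pow_mul_controllabilityMatrix_apply]
    exact (tendsto_pi_nhds.mp hv i).comp (tendsto_add_atTop_nat j)
  obtain ⟨B, hB⟩ := hC.exists_right_inv
  simpa [mul_assoc, hB] using hAC.mul_const B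

variable {A : Matrix (Fin n) (Fin n) ℍ[ℝ]} {v : Fin n → ℍ[ℝ]}

theorem sum_normSq_vecMul_pow_add_sum (h : A * Aᴴ + vecMulVec v (star v) = 1)
    (w : Fin n → ℍ[ℝ]) (k : ℕ) :
    ∑ i, Quaternion.normSq ((w ᵥ* A ^ k) i) +
      ∑ j ∈ Finset.range k, Quaternion.normSq (w ⬝ᵥ (A ^ j *ᵥ v)) =
      ∑ i, Quaternion.normSq (w i) := by
  have hw := vecMul_pow_dotProduct_star_add_sum h w k
  simp only [Quaternion.dotProduct_star_self, Quaternion.self_mul_star,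
    ← Quaternion.algebraMap_def, ← map_sum, ← map_add] at hw
  exact (algebraMap ℝ ℍ[ℝ]).injective hw

theorem tendsto_pow_mulVec_nhds_zero (h : A * Aᴴ + vecMulVec v (star v) = 1) :
    Tendsto (fun k => A ^ k *ᵥ v) atTop (𝓝 0) := by
  refine tendsto_pi_nhds.mpr fun i => ?_
  have hbound (k : ℕ) : ∑ j ∈ Finset.range k, Quaternion.normSq ((A ^ j *ᵥ v) i) ≤ 1 := by
    have hk := sum_normSq_vecMul_pow_add_sum h (Pi.single i 1) k
    simp only [single_one_dotProduct, Pi.single_apply, apply_ite, Quaternion.normSq.map_one,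
      Quaternion.normSq.map_zero, Finset.sum_ite_eq', Finset.mem_univ, if_true] at hk
    have hrow : 0 ≤ ∑ l, Quaternion.normSq ((Pi.single i 1 ᵥ* A ^ k) l) :=
      Finset.sum_nonneg fun _ _ => Quaternion.normSq_nonneg
    linarith
  have hsq := (summable_of_sum_range_le (fun _ => Quaternion.normSq_nonneg) hbound)
    |>.tendsto_atTop_zero
  rw [Pi.zero_apply, tendsto_zero_iff_norm_tendsto_zero]
  simpa [Quaternion.normSq_eq_norm_mul_self, Real.sqrt_mul_self] using hsq.sqrt

theorem isUnit_controllabilityMatrix_of_tendsto (h : A * Aᴴ + vecMulVec v (star v) = 1)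
    (hP : Tendsto (fun k => A ^ k * (A ^ k)ᴴ) atTop (𝓝 0)) :
    IsUnit (controllabilityMatrix A v) := by
  by_contra hC
  obtain ⟨w, hw0, hwC⟩ := exists_vecMul_eq_zero_of_not_isUnit hC
  have hw (j : ℕ) : w ⬝ᵥ (A ^ j *ᵥ v) = 0 :=
    dotProduct_pow_mulVec_eq_zero (fun i hi => congrFun hwC ⟨i, Fintype.card_fin n ▸ hi⟩) j
  have hconst (k : ℕ) : w ⬝ᵥ ((A ^ k * (A ^ k)ᴴ) *ᵥ star w) = w ⬝ᵥ star w := by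
    have hk := vecMul_pow_dotProduct_star_add_sum h w k
    simpa only [hw, zero_mul, Finset.sum_const_zero, add_zero, vecMul_dotProduct_star_vecMul]
      using hk
  have hlim : Tendsto (fun k => w ⬝ᵥ ((A ^ k * (A ^ k)ᴴ) *ᵥ star w)) atTop (𝓝 0) := by
    have hcont : Continuous fun M : Matrix (Fin n) (Fin n) ℍ[ℝ] => w ⬝ᵥ (M *ᵥ star w) :=
      continuous_const.dotProduct (continuous_id.matrix_mulVec continuous_const)
    simpa only [Function.comp_def, zero_mulVec, dotProduct_zero] using (hcont.tendsto 0).comp hP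
  exact hw0 (Quaternion.dotProduct_star_self_eq_zero.mp
    (tendsto_const_nhds_iff.mp (hlim.congr hconst)))

end Controllability

/-- For A ∈ ℍⁿˣⁿ and v ∈ ℍⁿ with AA* + vv* = I, the pair (A, v) is controllable
(the controllability matrix [v, Av, …, Aⁿ⁻¹v] is invertible) iff Aᵏ(Aᵏ)* → 0. -/
theorem controllable_iff_stable (n : ℕ) (A : Matrix (Fin n) (Fin n) (Quaternion ℝ))
    (v : Fin n → Quaternion ℝ)
    (h : A * Aᴴ + Matrix.vecMulVec v (star v) = 1) :
    IsUnit (Matrix.of fun i j : Fin n => ((A ^ (j : ℕ)).mulVec v) i) ↔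
      Tendsto (fun k : ℕ => A ^ k * (A ^ k)ᴴ) atTop (nhds 0) := by
  refine ⟨fun hC => ?_, isUnit_controllabilityMatrix_of_tendsto h⟩
  have hA := tendsto_pow_nhds_zero_of_isUnit_controllabilityMatrix hC
    (tendsto_pow_mulVec_nhds_zero h)
  simpa [star_eq_conjTranspose] using hA.mul hA.star
end

section
/- Let A ∈ ℍⁿˣⁿ be stable (Aᵏ → 0 as k → ∞) and v ∈ ℍⁿ. Then the Stein equation P − A P A* = v v* has a unique Hermitian solution, given by the convergent series P = Σ_{k≥0} Aᵏ v v* (Aᵏ)*, and P is positive semidefinite; if in addition the pair (A, v) is controllable then P is positive definite. -/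
/-!
Since `Aᵏ → 0`, some power of `A` has norm at most `1/2` in a submultiplicative matrix norm, so
`‖Aᵏ‖` decays geometrically and `∑ Aᵏ M (Aᵏ)*` converges absolutely. Shifting the index shows
that its sum `P` solves `P - A P A* = M`, and the difference `D` of two solutions satisfies
`D = Aᵏ D (A*)ᵏ → 0`. For `M = v v*` the quadratic form of the `k`-th term is `|x* Aᵏ v|²`, so
`x* P x` is a series of nonnegative reals; when `x ≠ 0` and the controllability matrix is
invertible, `x* Aʲ v ≠ 0` for some `j < n`, which makes the series positive.
-/

open Filter Matrix Topology

section NormedRing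

variable {R : Type*}

theorem exists_norm_pow_le_geometric_of_tendsto_pow [SeminormedRing R] {x : R}
    (hx : Tendsto (fun k : ℕ => x ^ k) atTop (𝓝 0)) :
    ∃ C r : ℝ, 0 ≤ r ∧ r < 1 ∧ ∀ k, ‖x ^ k‖ ≤ C * r ^ k := by
  obtain ⟨m, hhalf, hm⟩ := ((hx.norm.eventually
    (ge_mem_nhds (by norm_num : ‖(0 : R)‖ < 1 / 2))).and (eventually_gt_atTop 0)).exists
  have hdecay (s q : ℕ) : ‖x ^ (s + m * q)‖ ≤ ‖x ^ s‖ * (1 / 2) ^ q := by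
    induction q with
    | zero => simp
    | succ q ih =>
      calc ‖x ^ (s + m * (q + 1))‖ = ‖x ^ (s + m * q) * x ^ m‖ := by
            rw [← pow_add, mul_add_one, add_assoc]
        _ ≤ ‖x ^ (s + m * q)‖ * ‖x ^ m‖ := norm_mul_le _ _
        _ ≤ ‖x ^ s‖ * (1 / 2) ^ q * (1 / 2) :=
            mul_le_mul ih hhalf (norm_nonneg _) (by positivity)
        _ = ‖x ^ s‖ * (1 / 2) ^ (q + 1) := by ring
  -- `r` is the `m`-th root of `1 / 2`, so that `(1 / 2) ^ q = r ^ (m * q)`.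
  set r : ℝ := (1 / 2) ^ ((m : ℝ)⁻¹)
  have hr0 : 0 ≤ r := by positivity
  have hr1 : r < 1 := Real.rpow_lt_one (by norm_num) (by norm_num) (by positivity)
  have hrm : r ^ m = 1 / 2 := Real.rpow_inv_natCast_pow (by norm_num) hm.ne'
  refine ⟨2 * ∑ s ∈ Finset.range m, ‖x ^ s‖, r, hr0, hr1, fun k => ?_⟩
  have hs : k % m < m := Nat.mod_lt _ hm
  have hrs : 1 / 2 ≤ r ^ (k % m) := hrm ▸ pow_le_pow_of_le_one hr0 hr1.le hs.le
  calc ‖x ^ k‖ = ‖x ^ (k % m + m * (k / m))‖ := by rw [Nat.mod_add_div]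
    _ ≤ ‖x ^ (k % m)‖ * (1 / 2) ^ (k / m) := hdecay _ _
    _ ≤ (∑ s ∈ Finset.range m, ‖x ^ s‖) * (2 * r ^ (k % m) * r ^ (m * (k / m))) := by
        rw [pow_mul, hrm]
        gcongr
        · exact Finset.single_le_sum (fun s _ => norm_nonneg (x ^ s)) (Finset.mem_range.2 hs)
        · exact le_mul_of_one_le_left (by positivity) (by linarith)
    _ = 2 * (∑ s ∈ Finset.range m, ‖x ^ s‖) * r ^ k := by
        rw [mul_assoc 2, ← pow_add, Nat.mod_add_div]; ring

theorem summable_pow_mul_mul_pow_of_tendsto [NormedRing R] [CompleteSpace R] {x y : R}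
    (hx : Tendsto (fun k : ℕ => x ^ k) atTop (𝓝 0))
    (hy : Tendsto (fun k : ℕ => y ^ k) atTop (𝓝 0)) (a : R) :
    Summable fun k : ℕ => x ^ k * a * y ^ k := by
  obtain ⟨C, r, hr0, hr1, hxr⟩ := exists_norm_pow_le_geometric_of_tendsto_pow hx
  obtain ⟨D, s, hs0, hs1, hys⟩ := exists_norm_pow_le_geometric_of_tendsto_pow hy
  have hrs : r * s < 1 := mul_lt_one_of_nonneg_of_lt_one_left hr0 hr1 hs1.le
  refine Summable.of_norm_bounded
    ((summable_geometric_of_lt_one (by positivity) hrs).mul_left (C * ‖a‖ * D)) fun k => ?_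
  calc ‖x ^ k * a * y ^ k‖ ≤ ‖x ^ k‖ * ‖a‖ * ‖y ^ k‖ := norm_mul₃_le
    _ ≤ C * r ^ k * ‖a‖ * (D * s ^ k) :=
        mul_le_mul (mul_le_mul_of_nonneg_right (hxr k) (norm_nonneg a)) (hys k) (norm_nonneg _)
          (mul_nonneg ((norm_nonneg _).trans (hxr k)) (norm_nonneg a))
    _ = C * ‖a‖ * D * (r * s) ^ k := by ring

end NormedRing

section TopologicalRing

variable {R : Type*} [Ring R] [TopologicalSpace R] [IsTopologicalRing R] [T2Space R]

theorem HasSum.sub_mul_mul_eq {x y a P : R} (h : HasSum (fun k : ℕ => x ^ k * a * y ^ k) P) :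
    P - x * P * y = a := by
  have hshift : HasSum (fun k : ℕ => x ^ (k + 1) * a * y ^ (k + 1)) (x * P * y) := by
    have hterm (k : ℕ) : x * (x ^ k * a * y ^ k) * y = x ^ (k + 1) * a * y ^ (k + 1) := by
      rw [pow_succ', pow_succ]; simp only [mul_assoc]
    simpa only [hterm] using (h.mul_left x).mul_right y
  rw [hshift.unique ((hasSum_nat_add_iff' 1).2 h)]
  simp

theorem eq_of_sub_mul_mul_eq_of_tendsto_pow {x y a P Q : R}
    (hx : Tendsto (fun k : ℕ => x ^ k) atTop (𝓝 0))
    (hy : Tendsto (fun k : ℕ => y ^ k) atTop (𝓝 0))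
    (hP : P - x * P * y = a) (hQ : Q - x * Q * y = a) : Q = P := by
  have hD : x * (Q - P) * y = Q - P := by
    have hP' : x * P * y = P - a := by rw [← hP, sub_sub_cancel]
    have hQ' : x * Q * y = Q - a := by rw [← hQ, sub_sub_cancel]
    rw [mul_sub, sub_mul, hP', hQ', sub_sub_sub_cancel_right]
  have hDk (k : ℕ) : x ^ k * (Q - P) * y ^ k = Q - P := by
    induction k with
    | zero => simp
    | succ k ih =>
      calc x ^ (k + 1) * (Q - P) * y ^ (k + 1) = x ^ k * (x * (Q - P) * y) * y ^ k := by
            rw [pow_succ, pow_succ']; simp only [mul_assoc]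
        _ = Q - P := by rw [hD, ih]
  have hlim : Tendsto (fun k : ℕ => x ^ k * (Q - P) * y ^ k) atTop (𝓝 (0 * (Q - P) * 0)) :=
    (hx.mul_const _).mul hy
  simp only [hDk, zero_mul, mul_zero] at hlim
  exact sub_eq_zero.1 (tendsto_nhds_unique tendsto_const_nhds hlim)

end TopologicalRing

section HasSum

variable {ι α n : Type*}

theorem HasSum.matrix_isHermitian [AddCommMonoid α] [StarAddMonoid α] [TopologicalSpace α]
    [ContinuousStar α] [T2Space α] {f : ι → Matrix n n α} {P : Matrix n n α}
    (h : HasSum f P) (hf : ∀ i, (f i).IsHermitian) : P.IsHermitian := by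
  have hP : HasSum f Pᴴ := by simpa only [(hf _).eq] using h.matrix_conjTranspose
  exact hP.unique h

theorem HasSum.matrix_dotProduct_mulVec [Fintype n] [NonUnitalNonAssocSemiring α]
    [TopologicalSpace α] [IsTopologicalSemiring α] {f : ι → Matrix n n α} {P : Matrix n n α}
    (h : HasSum f P) (u w : n → α) : HasSum (fun i => u ⬝ᵥ f i *ᵥ w) (u ⬝ᵥ P *ᵥ w) :=
  h.map ({ toFun X := u ⬝ᵥ X *ᵥ w
           map_zero' := by rw [zero_mulVec, dotProduct_zero]
           map_add' X Y := by rw [add_mulVec, dotProduct_add] } : Matrix n n α →+ α)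
    (continuous_const.dotProduct (continuous_id.matrix_mulVec continuous_const))

end HasSum

namespace Matrix

variable {n α : Type*} [Fintype n]

theorem tendsto_conjTranspose_pow [Semiring α] [StarRing α] [TopologicalSpace α]
    [ContinuousStar α] [DecidableEq n] {A : Matrix n n α}
    (hA : Tendsto (fun k : ℕ => A ^ k) atTop (𝓝 0)) :
    Tendsto (fun k : ℕ => Aᴴ ^ k) atTop (𝓝 0) := by
  simpa only [Function.comp_def, id, conjTranspose_pow, conjTranspose_zero] using
    (continuous_id.matrix_conjTranspose.tendsto 0).comp hA

theorem summable_pow_mul_mul_conjTranspose_pow [NormedRing α] [StarRing α] [ContinuousStar α]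
    [CompleteSpace α] [DecidableEq n] {A : Matrix n n α}
    (hA : Tendsto (fun k : ℕ => A ^ k) atTop (𝓝 0)) (M : Matrix n n α) :
    Summable fun k : ℕ => A ^ k * M * (A ^ k)ᴴ := by
  -- The `L∞` operator norm induces the product uniformity, so completeness of the
  -- normed ring of matrices is that of `n → n → α`.
  let _ : NormedRing (Matrix n n α) := Matrix.linftyOpNormedRing
  have _ : @CompleteSpace (Matrix n n α) PseudoMetricSpace.toUniformSpace :=
    inferInstanceAs (CompleteSpace (n → n → α))
  have h := summable_pow_mul_mul_pow_of_tendsto hA (tendsto_conjTranspose_pow hA) M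
  simp only [← conjTranspose_pow] at h
  exact h

theorem mul_vecMulVec_star_mul_conjTranspose [Semiring α] [StarRing α]
    (B : Matrix n n α) (v : n → α) :
    B * vecMulVec v (star v) * Bᴴ = vecMulVec (B *ᵥ v) (star (B *ᵥ v)) := by
  rw [mul_vecMulVec, vecMulVec_mul, star_mulVec]

theorem star_dotProduct_vecMulVec_star_mulVec [Semiring α] [StarRing α] (w x : n → α) :
    star x ⬝ᵥ vecMulVec w (star w) *ᵥ x = (star x ⬝ᵥ w) * star (star x ⬝ᵥ w) := by
  rw [vecMulVec_mulVec, dotProduct_smul, op_smul_eq_mul, star_dotProduct w x]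

def controllabilityMatrix [Semiring α] {m : ℕ} (A : Matrix (Fin m) (Fin m) α) (v : Fin m → α) :
    Matrix (Fin m) (Fin m) α :=
  of fun i j => (A ^ (j : ℕ) *ᵥ v) i

theorem exists_dotProduct_pow_mulVec_ne_zero [Semiring α] {m : ℕ}
    {A : Matrix (Fin m) (Fin m) α} {v : Fin m → α} (hK : IsUnit (controllabilityMatrix A v))
    {y : Fin m → α} (hy : y ≠ 0) :
    ∃ j : Fin m, y ⬝ᵥ A ^ (j : ℕ) *ᵥ v ≠ 0 := by
  by_contra! h
  refine hy (vecMul_injective_of_isUnit hK ?_)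
  change y ᵥ* _ = 0 ᵥ* _
  rw [zero_vecMul]
  exact funext h

end Matrix

theorem hasSum_normSq_star_dotProduct_mulVec {ι n : Type*} [Fintype n]
    {B : ι → Matrix n n (Quaternion ℝ)} {v : n → Quaternion ℝ} {P : Matrix n n (Quaternion ℝ)}
    (h : HasSum (fun i => B i * vecMulVec v (star v) * (B i)ᴴ) P) (x : n → Quaternion ℝ) :
    HasSum (fun i => Quaternion.normSq (star x ⬝ᵥ B i *ᵥ v)) (star x ⬝ᵥ P *ᵥ x).re := by
  have h := (h.matrix_dotProduct_mulVec (star x) x).map (QuaternionAlgebra.reₗ _ _ _)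
    Quaternion.continuous_re
  simp only [mul_vecMulVec_star_mul_conjTranspose, star_dotProduct_vecMulVec_star_mulVec,
    Quaternion.self_mul_star] at h
  exact h

/-- For stable A ∈ ℍⁿˣⁿ (Aᵏ → 0) and v ∈ ℍⁿ, the Stein equation P − APA* = vv*
has a unique Hermitian solution, given by the convergent series
P = Σ Aᵏvv*(Aᵏ)*; P is positive semidefinite, and positive definite when the
pair (A, v) is controllable. -/
theorem stein_equation_solution (n : ℕ) (A : Matrix (Fin n) (Fin n) (Quaternion ℝ))
    (v : Fin n → Quaternion ℝ)
    (hA : Tendsto (fun k : ℕ => A ^ k) atTop (nhds 0)) :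
    ∃ P : Matrix (Fin n) (Fin n) (Quaternion ℝ),
      Pᴴ = P ∧
      P - A * P * Aᴴ = Matrix.vecMulVec v (star v) ∧
      (∀ Q : Matrix (Fin n) (Fin n) (Quaternion ℝ),
        Qᴴ = Q → Q - A * Q * Aᴴ = Matrix.vecMulVec v (star v) → Q = P) ∧
      HasSum (fun k : ℕ => A ^ k * Matrix.vecMulVec v (star v) * (A ^ k)ᴴ) P ∧
      (∀ x : Fin n → Quaternion ℝ, 0 ≤ (dotProduct (star x) (P.mulVec x)).re) ∧
      (IsUnit (Matrix.of fun i j : Fin n => ((A ^ (j : ℕ)).mulVec v) i) →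
        ∀ x : Fin n → Quaternion ℝ, x ≠ 0 →
          0 < (dotProduct (star x) (P.mulVec x)).re) := by
  obtain ⟨P, hP⟩ := summable_pow_mul_mul_conjTranspose_pow hA (vecMulVec v (star v))
  have hStein : P - A * P * Aᴴ = vecMulVec v (star v) := by
    simp only [conjTranspose_pow] at hP
    exact hP.sub_mul_mul_eq
  have hvv : (vecMulVec v (star v)).IsHermitian := by
    rw [IsHermitian, conjTranspose_vecMulVec, star_star]
  have hquad := hasSum_normSq_star_dotProduct_mulVec hP
  refine ⟨P, hP.matrix_isHermitian fun k => isHermitian_mul_mul_conjTranspose _ hvv, hStein,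
    fun Q _ hQ => eq_of_sub_mul_mul_eq_of_tendsto_pow hA (tendsto_conjTranspose_pow hA) hStein hQ,
    hP, fun x => (hquad x).nonneg fun k => Quaternion.normSq_nonneg, ?_⟩
  intro hK x hx
  obtain ⟨j, hj⟩ := exists_dotProduct_pow_mulVec_ne_zero hK (star_ne_zero.2 hx)
  exact (Quaternion.normSq_nonneg.lt_of_ne' (Quaternion.normSq_ne_zero.2 hj)).trans_le <|
    le_hasSum (hquad x) j fun k _ => Quaternion.normSq_nonneg
end

section
/- Suppose the (n+1) × (n+1) quaternionic matrix [[A, B], [C, D]] with D ∈ ℍ (scalar block) is unitary and the power series f(z) = D + Σ_{k≥1} zᵏ C A^{k−1} B. Then for any quaternions α, β of modulus < 1 where the series Υ(γ) = Σ_{k≥0} γᵏ C Aᵏ converges, one has 1 − f^ℓ(α) · conj(f^ℓ(β)) = Υ(α)Υ(β)* − α Υ(α)Υ(β)* β̄; in particular, taking β = α, 1 − |f^ℓ(α)|² = (1 − |α|²) Υ(α)Υ(α)*. -/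
/-!
Let `V = [[A, B], [C, D]]` and `Υ(γ) = Σ γᵏ C Aᵏ`, so that `Υ(γ) = C + γ Υ(γ) A`. Then the row
`[γ Υ(γ), 1]` is mapped by `V` to `[Υ(γ), f^ℓ(γ)]`. Since `V V* = 1`, pairing these images for
`γ = α` and `γ = β` gives `Υ(α) Υ(β)* + f^ℓ(α) f^ℓ(β)* = α Υ(α) Υ(β)* β̄ + 1`. For `β = α` the
number `Υ(α) Υ(α)*` is real, hence central, which turns `α Υ(α) Υ(α)* ᾱ` into `|α|² Υ(α) Υ(α)*`.
-/

open Matrix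

namespace Matrix

variable {R m n : Type*} [Fintype m] [DecidableEq m] [Fintype n]

theorem eq_add_mul_mul_of_hasSum [DecidableEq n] [Ring R] [TopologicalSpace R]
    [IsTopologicalRing R] [T2Space R] {S : Matrix m m R} {A : Matrix n n R} {C P : Matrix m n R}
    (h : HasSum (fun k => S ^ k * C * A ^ k) P) : P = C + S * P * A := by
  have htail : HasSum (fun k => S ^ (k + 1) * C * A ^ (k + 1)) (S * P * A) := by
    have := h.map (AddMonoidHom.mk' (fun M : Matrix m n R => S * M * A)
      fun M N => by rw [Matrix.mul_add, Matrix.add_mul])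
      ((continuous_const.matrix_mul continuous_id).matrix_mul continuous_const)
    simpa only [Function.comp_def, AddMonoidHom.mk'_apply, pow_succ' S, pow_succ A,
      Matrix.mul_assoc] using this
  simpa only [pow_zero, Matrix.one_mul, Matrix.mul_one]
    using h.unique (htail.zero_add (f := fun k => S ^ k * C * A ^ k))

theorem fromCols_mul_fromBlocks_of_eq_add_mul_mul [Semiring R]
    {A : Matrix n n R} {B : Matrix n m R} {C : Matrix m n R} {D : Matrix m m R}
    {S : Matrix m m R} {P : Matrix m n R} (hP : P = C + S * P * A) :
    fromCols (S * P) (1 : Matrix m m R) * fromBlocks A B C D = fromCols P (D + S * P * B) := by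
  rw [fromCols_mul_fromBlocks, Matrix.one_mul, Matrix.one_mul, add_comm (S * P * A), ← hP,
    add_comm]

theorem one_sub_mul_conjTranspose_of_fromBlocks_mem_unitary [DecidableEq n] [Ring R]
    [StarRing R] {A : Matrix n n R} {B : Matrix n m R} {C : Matrix m n R} {D : Matrix m m R}
    (hU : fromBlocks A B C D ∈ unitary (Matrix (n ⊕ m) (n ⊕ m) R))
    {S T : Matrix m m R} {P Q : Matrix m n R}
    (hP : P = C + S * P * A) (hQ : Q = C + T * Q * A) :
    1 - (D + S * P * B) * (D + T * Q * B)ᴴ = P * Qᴴ - S * P * Qᴴ * Tᴴ := by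
  set V := fromBlocks A B C D
  have hV : V * Vᴴ = 1 := Unitary.mul_star_self_of_mem hU
  have key : fromCols P (D + S * P * B) * (fromCols Q (D + T * Q * B))ᴴ =
      fromCols (S * P) (1 : Matrix m m R) * (fromCols (T * Q) (1 : Matrix m m R))ᴴ := by
    rw [← fromCols_mul_fromBlocks_of_eq_add_mul_mul hP,
      ← fromCols_mul_fromBlocks_of_eq_add_mul_mul hQ, conjTranspose_mul, Matrix.mul_assoc,
      ← Matrix.mul_assoc V, hV, Matrix.one_mul]
  simp only [conjTranspose_fromCols_eq_fromRows_conjTranspose, fromCols_mul_fromRows,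
    conjTranspose_one, Matrix.mul_one, conjTranspose_mul] at key
  rw [sub_eq_sub_iff_add_eq_add, key, Matrix.mul_assoc (S * P), add_comm]

end Matrix

theorem one_sub_mul_star_eq_of_fromBlocks_mem_unitary {R n : Type*} [Fintype n]
    [DecidableEq n] [Ring R] [StarRing R] [TopologicalSpace R] [IsTopologicalRing R]
    [T2Space R] {A : Matrix n n R} {B : Matrix n (Fin 1) R} {C : Matrix (Fin 1) n R} {D : R}
    (hU : fromBlocks A B C (of fun _ _ => D) ∈ unitary (Matrix (n ⊕ Fin 1) (n ⊕ Fin 1) R))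
    {α β : R} {Υα Υβ : Matrix (Fin 1) n R}
    (hΥα : HasSum (fun k : ℕ => α ^ k • (C * A ^ k)) Υα)
    (hΥβ : HasSum (fun k : ℕ => β ^ k • (C * A ^ k)) Υβ) :
    1 - (D + α * (Υα * B) 0 0) * star (D + β * (Υβ * B) 0 0) =
      (Υα * Υβᴴ) 0 0 - α * (Υα * Υβᴴ) 0 0 * star β := by
  have hrec {γ : R} {Υ : Matrix (Fin 1) n R} (h : HasSum (fun k => γ ^ k • (C * A ^ k)) Υ) :
      Υ = C + scalar (Fin 1) γ * Υ * A := by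
    refine eq_add_mul_mul_of_hasSum (h.congr_fun fun k => ?_)
    rw [← map_pow, scalar_apply, Matrix.mul_assoc, ← smul_eq_diagonal_mul]
  have := congrFun₂ (one_sub_mul_conjTranspose_of_fromBlocks_mem_unitary hU (hrec hΥα)
    (hrec hΥβ)) 0 0
  simpa [scalar_apply, mul_apply, Finset.mul_sum, Finset.sum_mul, mul_assoc] using this

theorem Quaternion.mul_coe_mul_star (a : Quaternion ℝ) (x : ℝ) :
    a * x * star a = (x * ‖a‖ ^ 2 : ℝ) := by
  rw [← coe_commutes, mul_assoc, self_mul_star, normSq_eq_norm_mul_self, ← sq, coe_mul]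

theorem unitary_realization_identity_general (n : ℕ)
    (A : Matrix (Fin n) (Fin n) (Quaternion ℝ))
    (B : Matrix (Fin n) (Fin 1) (Quaternion ℝ))
    (C : Matrix (Fin 1) (Fin n) (Quaternion ℝ)) (D : Quaternion ℝ)
    (hU : Matrix.fromBlocks A B C (Matrix.of fun _ _ => D) ∈
      unitary (Matrix (Fin n ⊕ Fin 1) (Fin n ⊕ Fin 1) (Quaternion ℝ)))
    (α β : Quaternion ℝ)
    (Υα Υβ : Matrix (Fin 1) (Fin n) (Quaternion ℝ))
    (hΥα : HasSum (fun k : ℕ => α ^ k • (C * A ^ k)) Υα)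
    (hΥβ : HasSum (fun k : ℕ => β ^ k • (C * A ^ k)) Υβ) :
    (1 - (D + α * (Υα * B) 0 0) * star (D + β * (Υβ * B) 0 0) =
        (Υα * Υβᴴ) 0 0 - α * (Υα * Υβᴴ) 0 0 * star β) ∧
    (1 - ‖D + α * (Υα * B) 0 0‖ ^ 2 = (1 - ‖α‖ ^ 2) * ((Υα * Υαᴴ) 0 0).re) := by
  refine ⟨one_sub_mul_star_eq_of_fromBlocks_mem_unitary hU hΥα hΥβ, ?_⟩
  have h := one_sub_mul_star_eq_of_fromBlocks_mem_unitary hU hΥα hΥα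
  set r := (Υα * Υαᴴ) 0 0
  have hr : r = (r.re : Quaternion ℝ) :=
    Quaternion.star_eq_self.mp ((isHermitian_mul_conjTranspose_self Υα).apply 0 0)
  rw [hr, Quaternion.mul_coe_mul_star, Quaternion.self_mul_star,
    Quaternion.normSq_eq_norm_mul_self, ← sq, ← Quaternion.coe_one, ← Quaternion.coe_sub,
    ← Quaternion.coe_sub] at h
  linear_combination Quaternion.coe_injective h

/-- For a unitary block matrix [[A,B],[C,D]] with scalar D, the power series
f(z) = D + Σ zᵏCAᵏ⁻¹B satisfies, with Υ(γ) = Σ γᵏCAᵏ (wherever these series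
converge and |α|, |β| < 1):
1 − f^ℓ(α)·conj(f^ℓ(β)) = Υ(α)Υ(β)* − αΥ(α)Υ(β)*β̄, where f^ℓ(α) = D + αΥ(α)B;
in particular 1 − |f^ℓ(α)|² = (1 − |α|²)Υ(α)Υ(α)*. -/
theorem unitary_realization_identity (n : ℕ)
    (A : Matrix (Fin n) (Fin n) (Quaternion ℝ))
    (B : Matrix (Fin n) (Fin 1) (Quaternion ℝ))
    (C : Matrix (Fin 1) (Fin n) (Quaternion ℝ)) (D : Quaternion ℝ)
    (hU : Matrix.fromBlocks A B C (Matrix.of fun _ _ => D) ∈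
      unitary (Matrix (Fin n ⊕ Fin 1) (Fin n ⊕ Fin 1) (Quaternion ℝ)))
    (α β : Quaternion ℝ) (hα : ‖α‖ < 1) (hβ : ‖β‖ < 1)
    (Υα Υβ : Matrix (Fin 1) (Fin n) (Quaternion ℝ))
    (hΥα : HasSum (fun k : ℕ => α ^ k • (C * A ^ k)) Υα)
    (hΥβ : HasSum (fun k : ℕ => β ^ k • (C * A ^ k)) Υβ) :
    (1 - (D + α * (Υα * B) 0 0) * star (D + β * (Υβ * B) 0 0) =
        (Υα * Υβᴴ) 0 0 - α * (Υα * Υβᴴ) 0 0 * star β) ∧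
    (1 - ‖D + α * (Υα * B) 0 0‖ ^ 2 = (1 - ‖α‖ ^ 2) * ((Υα * Υαᴴ) 0 0).re) :=
  unitary_realization_identity_general n A B C D hU α β Υα Υβ hΥα hΥβ
end
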